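/- For each of the six representative signatures of the Petersen graph, the chromatic number is chi = 1; the zero-free chromatic number is chi* = 2 for sigma(+P), sigma(P_1), sigma(P_2,2), sigma(P_2,3), sigma(P_3,2), while chi*(P, sigma(P_3,3)) = 1. -/

import Mathlib

open SimpleGraph Finset


/-- Vertices of the Petersen graph: 2-element subsets of `Fin 5`. -/
abbrev PV : Type := {s : Finset (Fin 5) // s.card = 2}

/-- The Petersen graph as the Kneser graph K(5,2). -/
def petersen : SimpleGraph PV where
  Adj a b := Disjoint a.1 b.1
  symm := ⟨fun a b (h : Disjoint a.1 b.1) => h.symm⟩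
  loopless := ⟨fun a (h : Disjoint a.1 a.1) => by
    have h2 := a.2
    rw [disjoint_self.mp h] at h2
    simp at h2⟩

def v12 : PV := ⟨{0, 1}, by decide⟩
def v13 : PV := ⟨{0, 2}, by decide⟩
def v14 : PV := ⟨{0, 3}, by decide⟩
def v15 : PV := ⟨{0, 4}, by decide⟩
def v23 : PV := ⟨{1, 2}, by decide⟩
def v24 : PV := ⟨{1, 3}, by decide⟩
def v25 : PV := ⟨{1, 4}, by decide⟩
def v34 : PV := ⟨{2, 3}, by decide⟩
def v35 : PV := ⟨{2, 4}, by decide⟩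
def v45 : PV := ⟨{3, 4}, by decide⟩

/-- The signature with negative edge set `N` (and all other edges positive). -/
def sgn (N : Finset (Sym2 PV)) : Sym2 PV → ℤˣ := fun e => if e ∈ N then -1 else 1

/-- The six representative signatures `σ(+P)`, `σ(P_1)`, `σ(P_{2,2})`, `σ(P_{2,3})`,
`σ(P_{3,2})`, `σ(P_{3,3})` of the Petersen graph. -/
def reps : Fin 6 → (Sym2 PV → ℤˣ) :=
  ![sgn ∅,
    sgn {s(v12, v34)},
    sgn {s(v14, v25), s(v34, v15)},
    sgn {s(v13, v24), s(v14, v23)},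
    sgn {s(v14, v25), s(v34, v15), s(v24, v35)},
    sgn {s(v12, v34), s(v13, v24), s(v14, v23)}]

/-- A proper `k`-coloration of a signed graph: colors are integers of absolute value at
most `k`, and `κ(w) ≠ σ(vw) κ(v)` for every edge `vw`. -/
def IsProperCol {V : Type*} (G : SimpleGraph V) (σ : Sym2 V → ℤˣ) (k : ℕ) (κ : V → ℤ) : Prop :=
  (∀ v : V, |κ v| ≤ (k : ℤ)) ∧ ∀ u v : V, G.Adj u v → κ v ≠ (σ s(u, v) : ℤ) * κ u

/-- The chromatic number of a signed graph: the least `k` admitting a proper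
`k`-coloration. -/
noncomputable def chromNum {V : Type*} (G : SimpleGraph V) (σ : Sym2 V → ℤˣ) : ℕ :=
  sInf {k | ∃ κ : V → ℤ, IsProperCol G σ k κ}

/-- The zero-free chromatic number of a signed graph: the least `k` admitting a zero-free
proper `k`-coloration. -/
noncomputable def zfChromNum {V : Type*} (G : SimpleGraph V) (σ : Sym2 V → ℤˣ) : ℕ :=
  sInf {k | ∃ κ : V → ℤ, IsProperCol G σ k κ ∧ ∀ v : V, κ v ≠ 0}

/-- The number of proper `k`-colorations of a signed graph. -/
noncomputable def properColCount {V : Type*} (G : SimpleGraph V) (σ : Sym2 V → ℤˣ)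
    (k : ℕ) : ℕ :=
  Set.ncard {κ : V → ℤ | IsProperCol G σ k κ}

/-- The number of zero-free proper `k`-colorations of a signed graph. -/
noncomputable def zfColCount {V : Type*} (G : SimpleGraph V) (σ : Sym2 V → ℤˣ)
    (k : ℕ) : ℕ :=
  Set.ncard {κ : V → ℤ | IsProperCol G σ k κ ∧ ∀ v : V, κ v ≠ 0}

/-
A proper 1-colouration of a signed graph takes values in {-1, 0, 1}; in a zero-free one every
colour is ±1, so an edge uv forces κ(v) = -σ(uv) κ(u), and going around a closed walk W forces
(-1)^|W| σ(W) = 1. Each of the first five representative signatures leaves some pentagon of P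
all-positive, which rules out a zero-free 1-colouration there. A 0-colouration is identically 0,
which no edge tolerates, and no vertex if it must be zero-free. The upper bounds are explicit
colourings of the ten vertices, checked by evaluation.
-/

section SignedColoring

variable {V : Type*} {G : SimpleGraph V} {σ : Sym2 V → ℤˣ} {κ : V → ℤ}

theorem IsProperCol.mono {k m : ℕ} (h : IsProperCol G σ k κ) (hkm : k ≤ m) :
    IsProperCol G σ m κ :=
  ⟨fun v => (h.1 v).trans (by exact_mod_cast hkm), h.2⟩

theorem chromNum_eq_succ_iff (k : ℕ) :
    chromNum G σ = k + 1 ↔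
      (∃ κ, IsProperCol G σ (k + 1) κ) ∧ ¬ ∃ κ, IsProperCol G σ k κ :=
  Nat.sInf_upward_closed_eq_succ_iff
    (fun _ _ hle => Exists.imp fun _ hκ => hκ.mono hle) k

theorem zfChromNum_eq_succ_iff (k : ℕ) :
    zfChromNum G σ = k + 1 ↔
      (∃ κ, IsProperCol G σ (k + 1) κ ∧ ∀ v, κ v ≠ 0) ∧
        ¬ ∃ κ, IsProperCol G σ k κ ∧ ∀ v, κ v ≠ 0 :=
  Nat.sInf_upward_closed_eq_succ_iff
    (fun _ _ hle => Exists.imp fun _ hκ => ⟨hκ.1.mono hle, hκ.2⟩) k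

theorem IsProperCol.apply_eq_zero (h : IsProperCol G σ 0 κ) (v : V) : κ v = 0 :=
  abs_nonpos_iff.mp (h.1 v)

theorem not_exists_isProperCol_zero {u v : V} (huv : G.Adj u v) :
    ¬ ∃ κ, IsProperCol G σ 0 κ := fun ⟨_, h⟩ =>
  h.2 u v huv (by rw [h.apply_eq_zero u, h.apply_eq_zero v, mul_zero])

theorem not_exists_zeroFree_isProperCol_zero [Nonempty V] :
    ¬ ∃ κ, IsProperCol G σ 0 κ ∧ ∀ v, κ v ≠ 0 := fun ⟨_, h, hz⟩ =>
  hz _ (h.apply_eq_zero (Classical.arbitrary V))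

theorem IsProperCol.eq_neg_mul_of_zeroFree (h : IsProperCol G σ 1 κ) (hz : ∀ v, κ v ≠ 0)
    {u v : V} (huv : G.Adj u v) : κ v = -(σ s(u, v) : ℤ) * κ u := by
  have hne := h.2 u v huv
  have hu := abs_le.mp (h.1 u)
  have hv := abs_le.mp (h.1 v)
  have hu0 := hz u
  have hv0 := hz v
  rcases Int.units_eq_one_or (σ s(u, v)) with hσ | hσ <;> rw [hσ] at hne ⊢ <;>
    push_cast at hne ⊢ <;> omega

theorem IsProperCol.eq_of_walk_of_zeroFree (h : IsProperCol G σ 1 κ) (hz : ∀ v, κ v ≠ 0)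
    {u v : V} (p : G.Walk u v) :
    κ v = (((-1) ^ p.length * (p.edges.map σ).prod : ℤˣ) : ℤ) * κ u := by
  induction p with
  | nil => simp
  | cons hab p ih =>
    rw [ih, h.eq_neg_mul_of_zeroFree hz hab]
    simp only [Walk.length_cons, Walk.edges_cons, List.map_cons, List.prod_cons, pow_succ]
    push_cast
    ring

theorem not_exists_zeroFree_isProperCol_one_of_closedWalk {u : V} (p : G.Walk u u)
    (hp : (-1) ^ p.length * (p.edges.map σ).prod = -1) :
    ¬ ∃ κ, IsProperCol G σ 1 κ ∧ ∀ v, κ v ≠ 0 := fun ⟨κ, h, hz⟩ => by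
  have := h.eq_of_walk_of_zeroFree hz p
  rw [hp, Units.val_neg, Units.val_one] at this
  exact hz u (by omega)

def pentagon (a b c d e : V) (hab : G.Adj a b) (hbc : G.Adj b c) (hcd : G.Adj c d)
    (hde : G.Adj d e) (hea : G.Adj e a) : G.Walk a a :=
  .cons hab <| .cons hbc <| .cons hcd <| .cons hde <| .cons hea .nil

end SignedColoring

instance : DecidableRel petersen.Adj := fun a b => inferInstanceAs (Decidable (Disjoint a.1 b.1))

def petersenVertices : List PV := [v12, v13, v14, v15, v23, v24, v25, v34, v35, v45]

def petersenColoring (c : List ℤ) (v : PV) : ℤ := c.getD (petersenVertices.idxOf v) 0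

theorem exists_isProperCol_one_reps (i : Fin 6) : ∃ κ, IsProperCol petersen (reps i) 1 κ :=
  ⟨petersenColoring [-1, -1, 0, -1, 1, 0, 1, 0, 1, 0], by decide, by
    fin_cases i <;> simp only [reps, Fin.reduceFinMk, Matrix.cons_val] <;> decide⟩

theorem exists_zeroFree_isProperCol_two_reps (i : Fin 6) :
    ∃ κ, IsProperCol petersen (reps i) 2 κ ∧ ∀ v, κ v ≠ 0 :=
  ⟨petersenColoring [-2, -2, -2, -2, -1, -1, -1, 1, 2, 1], ⟨by decide, by
    fin_cases i <;> simp only [reps, Fin.reduceFinMk, Matrix.cons_val] <;> decide⟩, by decide⟩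

theorem exists_zeroFree_isProperCol_one_reps_five :
    ∃ κ, IsProperCol petersen (reps 5) 1 κ ∧ ∀ v, κ v ≠ 0 :=
  ⟨petersenColoring [-1, -1, -1, 1, -1, -1, 1, -1, 1, 1],
    ⟨by decide, by simp only [reps, Matrix.cons_val]; decide⟩, by decide⟩

theorem not_exists_zeroFree_isProperCol_one_reps (i : Fin 6) (hi : i ≠ 5) :
    ¬ ∃ κ, IsProperCol petersen (reps i) 1 κ ∧ ∀ v, κ v ≠ 0 := by
  -- each pentagon avoids the negative edges of its signature
  fin_cases i <;> simp only [reps, Fin.reduceFinMk, Matrix.cons_val]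
  · exact not_exists_zeroFree_isProperCol_one_of_closedWalk
      (pentagon v12 v34 v15 v23 v45 (by decide) (by decide) (by decide) (by decide) (by decide))
      (by decide)
  · exact not_exists_zeroFree_isProperCol_one_of_closedWalk
      (pentagon v12 v35 v14 v23 v45 (by decide) (by decide) (by decide) (by decide) (by decide))
      (by decide)
  · exact not_exists_zeroFree_isProperCol_one_of_closedWalk
      (pentagon v12 v34 v25 v13 v45 (by decide) (by decide) (by decide) (by decide) (by decide))
      (by decide)
  · exact not_exists_zeroFree_isProperCol_one_of_closedWalk
      (pentagon v12 v34 v15 v23 v45 (by decide) (by decide) (by decide) (by decide) (by decide))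
      (by decide)
  · exact not_exists_zeroFree_isProperCol_one_of_closedWalk
      (pentagon v12 v34 v25 v13 v45 (by decide) (by decide) (by decide) (by decide) (by decide))
      (by decide)
  · exact absurd rfl hi

/-- The chromatic number of every representative signed Petersen graph is 1; the
zero-free chromatic number is 2 except for `σ(P_{3,3})`, for which it is 1. -/
theorem petersen_chromatic_numbers :
    (∀ i : Fin 6, chromNum petersen (reps i) = 1) ∧
    zfChromNum petersen (reps 0) = 2 ∧ zfChromNum petersen (reps 1) = 2 ∧
    zfChromNum petersen (reps 2) = 2 ∧ zfChromNum petersen (reps 3) = 2 ∧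
    zfChromNum petersen (reps 4) = 2 ∧ zfChromNum petersen (reps 5) = 1 := by
  have chromNum_reps (i : Fin 6) : chromNum petersen (reps i) = 1 :=
    (chromNum_eq_succ_iff 0).2
      ⟨exists_isProperCol_one_reps i, not_exists_isProperCol_zero (u := v12) (v := v34) (by decide)⟩
  have zfChromNum_reps (i : Fin 6) (hi : i ≠ 5) : zfChromNum petersen (reps i) = 2 :=
    (zfChromNum_eq_succ_iff 1).2
      ⟨exists_zeroFree_isProperCol_two_reps i, not_exists_zeroFree_isProperCol_one_reps i hi⟩
  have : Nonempty PV := ⟨v12⟩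
  exact ⟨chromNum_reps, zfChromNum_reps 0 (by decide), zfChromNum_reps 1 (by decide),
    zfChromNum_reps 2 (by decide), zfChromNum_reps 3 (by decide), zfChromNum_reps 4 (by decide),
    (zfChromNum_eq_succ_iff 0).2
      ⟨exists_zeroFree_isProperCol_one_reps_five, not_exists_zeroFree_isProperCol_zero⟩⟩
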